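/- arXiv:1506.03131 — 2 statements merged into one kernel-verified Lean document; each statement's English description precedes it below -/
import Mathlib

section
/- For real numbers λ₁, λ₂, λ₃, λ₄ with |λᵢ| < 1, pairwise distinct, and a nonnegative integer S, the triple infinite sum ∑_{j₁,j₂,j₃ ∈ ℤ} λ₁^{|j₁|} λ₂^{|j₂|} λ₃^{|j₃|} λ₄^{|S-j₁-j₂-j₃|} equals ∑_{i=1}^{4} λᵢ^{S+3} ∏_{j≠i} (1-λⱼ²)/((λᵢ-λⱼ)(1-λᵢλⱼ)). -/
/-!
With `g_x(j) = x ^ |j|`, the sum is the value at `S` of the convolution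
`g_{λ₁} * g_{λ₂} * g_{λ₃} * g_{λ₄}` on `ℤ`. Cutting `ℤ` at `0` and `m` into two geometric series and
a finite geometric sum gives `(g_a * g_b)(m) = a^{|m|+1} B(a,b) + b^{|m|+1} B(b,a)` with
`B(x,y) = (1 - y²)/((x - y)(1 - xy))`. So convolving `g_a` with a linear combination of the `g_{x_i}`
gives another such combination, and a partial-fraction identity among the `B`s shows that the
`(k+1)`-fold convolution is `∑ᵢ xᵢ^{|n|+k} ∏_{j ≠ i} B(xᵢ,xⱼ)`. Absolute summability lets us
evaluate the triple sum one variable at a time.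
-/

open Finset

noncomputable def pairCoeff (x y : ℝ) : ℝ := (1 - y ^ 2) / ((x - y) * (1 - x * y))

/-- Closed form of the convolution of the sequences `j ↦ x i ^ |j|`, `i = 0, …, k`, at `n`. -/
noncomputable def geomConvFormula {k : ℕ} (x : Fin (k + 1) → ℝ) (n : ℤ) : ℝ :=
  ∑ i, x i ^ (n.natAbs + k) * ∏ j ∈ univ.erase i, pairCoeff (x i) (x j)

/-- The partial-fraction identity that makes `geomConvFormula` stable under convolution with
`j ↦ y 0 ^ |j|`. -/
def PairCoeffIdentity {k : ℕ} (y : Fin (k + 2) → ℝ) : Prop :=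
  ∑ i : Fin (k + 1), y i.succ ^ k * (∏ j ∈ univ.erase i, pairCoeff (y i.succ) (y j.succ)) *
      pairCoeff (y 0) (y i.succ) =
    y 0 ^ k * ∏ i : Fin (k + 1), pairCoeff (y 0) (y i.succ)

theorem Fin.prod_univ_erase_zero {M : Type*} [CommMonoid M] {n : ℕ} (f : Fin (n + 1) → M) :
    ∏ j ∈ univ.erase 0, f j = ∏ j : Fin n, f j.succ := by
  rw [← filter_ne', prod_filter, Fin.prod_univ_succ]
  simp [Fin.succ_ne_zero]

theorem Fin.prod_univ_erase_succ {M : Type*} [CommMonoid M] {n : ℕ} (f : Fin (n + 1) → M)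
    (i : Fin n) : ∏ j ∈ univ.erase i.succ, f j = f 0 * ∏ j ∈ univ.erase i, f j.succ := by
  simp only [← filter_ne', prod_filter, Fin.prod_univ_succ]
  simp [(Fin.succ_ne_zero i).symm]

theorem geomConvFormula_fin_one (x : Fin 1 → ℝ) (n : ℤ) :
    geomConvFormula x n = x 0 ^ n.natAbs := by
  simp [geomConvFormula]

theorem pairCoeffIdentity_fin_three {y : Fin 3 → ℝ} (hinj : Function.Injective y)
    (hprod : ∀ i j, i ≠ j → y i * y j ≠ 1) : PairCoeffIdentity y := by
  have hsub : ∀ i j, i ≠ j → y i - y j ≠ 0 := fun i j h => sub_ne_zero.2 (hinj.ne h)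
  have hone : ∀ i j, i ≠ j → 1 - y i * y j ≠ 0 := fun i j h => sub_ne_zero.2 (hprod i j h).symm
  simp only [PairCoeffIdentity, Fin.sum_univ_succ, Fin.sum_univ_zero, Fin.prod_univ_succ,
    Fin.prod_univ_zero, Fin.prod_univ_erase_zero, Fin.prod_univ_erase_succ, pairCoeff]
  field_simp (disch := first | exact hsub _ _ (by decide) | exact hone _ _ (by decide))
  ring

theorem pairCoeffIdentity_fin_four {y : Fin 4 → ℝ} (hinj : Function.Injective y)
    (hprod : ∀ i j, i ≠ j → y i * y j ≠ 1) : PairCoeffIdentity y := by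
  have hsub : ∀ i j, i ≠ j → y i - y j ≠ 0 := fun i j h => sub_ne_zero.2 (hinj.ne h)
  have hone : ∀ i j, i ≠ j → 1 - y i * y j ≠ 0 := fun i j h => sub_ne_zero.2 (hprod i j h).symm
  simp only [PairCoeffIdentity, Fin.sum_univ_succ, Fin.sum_univ_zero, Fin.prod_univ_succ,
    Fin.prod_univ_zero, Fin.prod_univ_erase_zero, Fin.prod_univ_erase_succ, pairCoeff]
  field_simp (disch := first | exact hsub _ _ (by decide) | exact hone _ _ (by decide))
  ring

theorem abs_mul_lt_one {x y : ℝ} (hx : |x| < 1) (hy : |y| < 1) : |x * y| < 1 := by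
  rw [abs_mul]
  exact mul_lt_one_of_nonneg_of_lt_one_left (abs_nonneg x) hx hy.le

theorem mul_ne_one_of_abs_lt_one {x y : ℝ} (hx : |x| < 1) (hy : |y| < 1) : x * y ≠ 1 :=
  fun h => by simpa [h] using abs_mul_lt_one hx hy

theorem summable_pow_natAbs {r : ℝ} (hr : |r| < 1) : Summable fun j : ℤ => r ^ j.natAbs :=
  .of_nat_of_neg (by simpa using summable_geometric_of_abs_lt_one hr)
    (by simpa using summable_geometric_of_abs_lt_one hr)

theorem hasSum_pow_natAbs_mul_pow_natAbs_sub_natCast {a b : ℝ} (ha : |a| < 1) (hb : |b| < 1)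
    (hab : a ≠ b) (m : ℕ) :
    HasSum (fun j : ℤ => a ^ j.natAbs * b ^ ((m : ℤ) - j).natAbs)
      (a ^ (m + 1) * pairCoeff a b + b ^ (m + 1) * pairCoeff b a) := by
  have hgeom : HasSum (fun k : ℕ => (a * b) ^ k) (1 - a * b)⁻¹ :=
    hasSum_geometric_of_abs_lt_one (abs_mul_lt_one ha hb)
  have hneg : HasSum (fun k : ℕ => a ^ (-(k + 1 : ℤ)).natAbs * b ^ ((m : ℤ) - -(k + 1)).natAbs)
      (a * b ^ (m + 1) * (1 - a * b)⁻¹) := by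
    refine (hgeom.mul_left (a * b ^ (m + 1))).congr_fun fun k => ?_
    rw [show (-(k + 1 : ℤ)).natAbs = k + 1 by omega,
      show ((m : ℤ) - -(k + 1)).natAbs = m + 1 + k by omega]
    ring
  have htail : HasSum (fun k : ℕ => a ^ (k + (m + 1)) * b ^ ((m : ℤ) - (k + (m + 1) : ℕ)).natAbs)
      (a ^ (m + 1) * b * (1 - a * b)⁻¹) := by
    refine (hgeom.mul_left (a ^ (m + 1) * b)).congr_fun fun k => ?_
    rw [show ((m : ℤ) - (k + (m + 1) : ℕ)).natAbs = k + 1 by omega]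
    ring
  have hhead : ∑ k ∈ range (m + 1), a ^ k * b ^ ((m : ℤ) - k).natAbs
      = ∑ k ∈ range (m + 1), a ^ k * b ^ (m + 1 - 1 - k) := by
    refine sum_congr rfl fun k hk => ?_
    rw [show ((m : ℤ) - k).natAbs = m + 1 - 1 - k by grind]
  have hpos :=
    (hasSum_nat_add_iff (f := fun k : ℕ => a ^ k * b ^ ((m : ℤ) - k).natAbs) (m + 1)).1 htail
  convert HasSum.of_nat_of_neg_add_one
    (f := fun j : ℤ => a ^ j.natAbs * b ^ ((m : ℤ) - j).natAbs) (by simpa using hpos) hneg using 1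
  have h₁ : a - b ≠ 0 := sub_ne_zero.2 hab
  have h₂ : b - a ≠ 0 := sub_ne_zero.2 hab.symm
  have h₃ : 1 - a * b ≠ 0 := sub_ne_zero.2 (mul_ne_one_of_abs_lt_one ha hb).symm
  have h₄ : 1 - b * a ≠ 0 := sub_ne_zero.2 (mul_ne_one_of_abs_lt_one hb ha).symm
  rw [hhead, eq_div_of_mul_eq h₁ (geom_sum₂_mul a b (m + 1)), pairCoeff, pairCoeff]
  field_simp
  ring

theorem hasSum_pow_natAbs_mul_pow_natAbs_sub {a b : ℝ} (ha : |a| < 1) (hb : |b| < 1)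
    (hab : a ≠ b) (n : ℤ) :
    HasSum (fun j : ℤ => a ^ j.natAbs * b ^ (n - j).natAbs)
      (a ^ (n.natAbs + 1) * pairCoeff a b + b ^ (n.natAbs + 1) * pairCoeff b a) := by
  obtain ⟨m, rfl | rfl⟩ := Int.eq_nat_or_neg n
  · simpa using hasSum_pow_natAbs_mul_pow_natAbs_sub_natCast ha hb hab m
  · rw [Int.natAbs_neg, Int.natAbs_natCast]
    refine (Equiv.neg ℤ).hasSum_iff.1 ?_
    refine (hasSum_pow_natAbs_mul_pow_natAbs_sub_natCast ha hb hab m).congr_fun fun j => ?_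
    simp only [Function.comp_apply, Equiv.neg_apply, Int.natAbs_neg]
    congr 2
    omega

theorem hasSum_pow_natAbs_mul_geomConvFormula_tail {k : ℕ} {y : Fin (k + 2) → ℝ}
    (hy : ∀ i, |y i| < 1) (hy0 : ∀ i : Fin (k + 1), y 0 ≠ y i.succ) (hid : PairCoeffIdentity y)
    (n : ℤ) :
    HasSum (fun j : ℤ => y 0 ^ j.natAbs * geomConvFormula (Fin.tail y) (n - j))
      (geomConvFormula y n) := by
  set c : Fin (k + 1) → ℝ := fun i =>
    y i.succ ^ k * ∏ j ∈ univ.erase i, pairCoeff (y i.succ) (y j.succ)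
  have hterm := fun i =>
    (hasSum_pow_natAbs_mul_pow_natAbs_sub (hy 0) (hy i.succ) (hy0 i) n).mul_left (c i)
  have hval : geomConvFormula y n = ∑ i, c i * (y 0 ^ (n.natAbs + 1) * pairCoeff (y 0) (y i.succ)
      + y i.succ ^ (n.natAbs + 1) * pairCoeff (y i.succ) (y 0)) := by
    simp only [mul_add, sum_add_distrib]
    rw [geomConvFormula, Fin.sum_univ_succ, Fin.prod_univ_erase_zero]
    congr 1
    · unfold PairCoeffIdentity at hid
      rw [show n.natAbs + (k + 1) = n.natAbs + 1 + k by ring, pow_add, mul_assoc, ← hid, mul_sum]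
      exact sum_congr rfl fun i _ => by ring
    · refine sum_congr rfl fun i _ => ?_
      simp only [Fin.prod_univ_erase_succ, c]
      ring
  rw [hval]
  refine (hasSum_sum fun i _ => hterm i).congr_fun fun j => ?_
  simp only [geomConvFormula, Fin.tail, mul_sum, pow_add, c]
  exact sum_congr rfl fun i _ => by ring

theorem HasSum.prod_of_fiberwise {α β γ : Type*} [AddCommMonoid α] [TopologicalSpace α]
    [ContinuousAdd α] [T3Space α] {f : β × γ → α} {g : β → α} {a : α} (hg : HasSum g a)
    (hf : ∀ b, HasSum (fun c => f (b, c)) (g b)) (hsum : Summable f) : HasSum f a :=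
  (hsum.hasSum.prod_fiberwise hf).unique hg ▸ hsum.hasSum

theorem summable_pow_natAbs_mul_pow_natAbs_mul_pow_natAbs_mul {a b c : ℝ} (ha : |a| < 1)
    (hb : |b| < 1) (hc : |c| < 1) {g : ℤ × ℤ × ℤ → ℝ} (hg : ∀ t, |g t| ≤ 1) :
    Summable fun t : ℤ × ℤ × ℤ =>
      a ^ t.1.natAbs * b ^ t.2.1.natAbs * c ^ t.2.2.natAbs * g t := by
  have habs : ∀ {x : ℝ}, |x| < 1 → Summable fun j : ℤ => |x| ^ j.natAbs := fun hx =>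
    summable_pow_natAbs (by rwa [abs_abs])
  refine .of_norm_bounded ((habs ha).mul_of_nonneg ((habs hb).mul_of_nonneg (habs hc)
    (fun _ => by positivity) fun _ => by positivity) (fun _ => by positivity)
      fun _ => by positivity) fun t => ?_
  simp only [Real.norm_eq_abs, abs_mul, abs_pow, ← mul_assoc]
  exact mul_le_of_le_one_right (by positivity) (hg t)

theorem stmt_11 (l : Fin 4 → ℝ) (hl : ∀ i, |l i| < 1)
    (hdist : Function.Injective l) (S : ℕ) :
    ∑' t : ℤ × ℤ × ℤ,
        l 0 ^ t.1.natAbs * l 1 ^ t.2.1.natAbs * l 2 ^ t.2.2.natAbs *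
          l 3 ^ ((S : ℤ) - t.1 - t.2.1 - t.2.2).natAbs =
      ∑ i : Fin 4, l i ^ (S + 3) *
        ∏ j ∈ Finset.univ.erase i, (1 - l j ^ 2) / ((l i - l j) * (1 - l i * l j)) := by
  have hprod : ∀ i j, i ≠ j → l i * l j ≠ 1 := fun i j _ =>
    mul_ne_one_of_abs_lt_one (hl i) (hl j)
  have hinj₁ : Function.Injective (Fin.tail l) := hdist.comp (Fin.succ_injective _)
  have hinj₂ : Function.Injective (Fin.tail (Fin.tail l)) := hinj₁.comp (Fin.succ_injective _)
  set F : ℤ × ℤ × ℤ → ℝ := fun t => l 0 ^ t.1.natAbs * l 1 ^ t.2.1.natAbs *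
    l 2 ^ t.2.2.natAbs * l 3 ^ ((S : ℤ) - t.1 - t.2.1 - t.2.2).natAbs with hF
  have hsum : Summable F := summable_pow_natAbs_mul_pow_natAbs_mul_pow_natAbs_mul (hl 0) (hl 1)
    (hl 2) fun t => by rw [abs_pow]; exact pow_le_one₀ (abs_nonneg _) (hl 3).le
  have h₃ : ∀ t₁ t₂ : ℤ, HasSum (fun t₃ : ℤ => F (t₁, t₂, t₃))
      (l 0 ^ t₁.natAbs * l 1 ^ t₂.natAbs * geomConvFormula (Fin.tail (Fin.tail l)) (S - t₁ - t₂)) :=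
    fun t₁ t₂ => ((hasSum_pow_natAbs_mul_geomConvFormula_tail (y := Fin.tail (Fin.tail l))
      (fun _ => hl _) (fun i => hinj₂.ne (Fin.succ_ne_zero i).symm)
      (by simp [PairCoeffIdentity]) (S - t₁ - t₂)).mul_left _).congr_fun
      fun t₃ => by simp [hF, geomConvFormula_fin_one, Fin.tail, mul_assoc]
  have h₂ : ∀ t₁ : ℤ, HasSum (fun t₂ : ℤ =>
      l 0 ^ t₁.natAbs * l 1 ^ t₂.natAbs * geomConvFormula (Fin.tail (Fin.tail l)) (S - t₁ - t₂))
      (l 0 ^ t₁.natAbs * geomConvFormula (Fin.tail l) (S - t₁)) :=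
    fun t₁ => ((hasSum_pow_natAbs_mul_geomConvFormula_tail (y := Fin.tail l) (fun _ => hl _)
      (fun i => hinj₁.ne (Fin.succ_ne_zero i).symm) (pairCoeffIdentity_fin_three hinj₁
        fun i j h => hprod _ _ ((Fin.succ_injective _).ne h)) (S - t₁)).mul_left _).congr_fun
      fun t₂ => by simp [Fin.tail, mul_assoc, sub_sub]
  have h₁ : HasSum (fun t₁ : ℤ => l 0 ^ t₁.natAbs * geomConvFormula (Fin.tail l) (S - t₁))
      (geomConvFormula l S) :=
    hasSum_pow_natAbs_mul_geomConvFormula_tail hl (fun i => hdist.ne (Fin.succ_ne_zero i).symm)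
      (pairCoeffIdentity_fin_four hdist hprod) _
  rw [(h₁.prod_of_fiberwise (fun t₁ => (h₂ t₁).prod_of_fiberwise (h₃ t₁) (hsum.prod_factor t₁))
    hsum).tsum_eq]
  simp [geomConvFormula, pairCoeff]
end

section
/- For real numbers λ₁, λ₂, λ₃, λ₄ with |λᵢ| < 1 and λ₃ ≠ λ₄, and a nonnegative integer S, the sum ∑_{j₁≤0} ∑_{j₂≤0} ∑_{j₃≥0} λ₁^{-j₁} λ₂^{-j₂} λ₃^{j₃} λ₄^{|S-j₁-j₂-j₃|} equals λ₃^{S+1}(1-λ₄²)/((λ₃-λ₄)(1-λ₃λ₁)(1-λ₃λ₂)(1-λ₃λ₄)) + λ₄^{S+1}/((λ₄-λ₃)(1-λ₄λ₁)(1-λ₄λ₂)). -/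
/-!
Summing first over `j₃`, the sum `∑ₙ λ₃ⁿ λ₄^|m - n|` splits at `n = m` into a finite geometric
sum and a geometric tail, and equals `A λ₃ᵐ + B λ₄ᵐ` with `A, B` independent of `m`. Since
`m = S + j₁ + j₂` enters only through these two powers, the remaining sums over `j₁, j₂` are
products of geometric series.
-/

section GeometricSums

variable {𝕜 : Type*} [NormedField 𝕜] {a b : 𝕜}

lemma norm_mul_lt_one (ha : ‖a‖ < 1) (hb : ‖b‖ < 1) : ‖a * b‖ < 1 := by
  rw [norm_mul]
  exact mul_lt_one_of_nonneg_of_lt_one_left (norm_nonneg a) ha hb.le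

lemma one_sub_mul_ne_zero_of_norm_lt_one (ha : ‖a‖ < 1) (hb : ‖b‖ < 1) : 1 - a * b ≠ 0 := by
  intro h
  have := norm_mul_lt_one ha hb
  rw [← sub_eq_zero.mp h, norm_one] at this
  exact this.false

lemma summable_norm_pow (ha : ‖a‖ < 1) : Summable fun n : ℕ => ‖a ^ n‖ := by
  simpa only [norm_pow] using summable_geometric_of_lt_one (norm_nonneg a) ha

variable [CompleteSpace 𝕜]

lemma Summable.mul_pow_of_norm_le_one {ι : Type*} {f : ι → 𝕜} (hf : Summable fun i => ‖f i‖)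
    (hb : ‖b‖ ≤ 1) (e : ι → ℕ) : Summable fun i => f i * b ^ e i :=
  .of_norm_bounded hf fun i => by
    rw [norm_mul, norm_pow]
    exact mul_le_of_le_one_right (norm_nonneg _) (pow_le_one₀ (norm_nonneg b) hb)

lemma tsum_pow_mul_pow_natAbs_sub (ha : ‖a‖ < 1) (hb : ‖b‖ < 1) (hab : a ≠ b) (m : ℕ) :
    ∑' n : ℕ, a ^ n * b ^ ((m : ℤ) - n).natAbs =
      a * (1 - b ^ 2) / ((a - b) * (1 - a * b)) * a ^ m + b / (b - a) * b ^ m := by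
  have hab' : a - b ≠ 0 := sub_ne_zero.mpr hab
  have hba' : b - a ≠ 0 := sub_ne_zero.mpr hab.symm
  have h1ab := one_sub_mul_ne_zero_of_norm_lt_one ha hb
  have head : ∑ n ∈ Finset.range (m + 1), a ^ n * b ^ ((m : ℤ) - n).natAbs =
      (a ^ (m + 1) - b ^ (m + 1)) / (a - b) := by
    rw [eq_div_iff hab', ← geom_sum₂_mul]
    congr 1
    refine Finset.sum_congr rfl fun n hn => ?_
    rw [Finset.mem_range] at hn
    congr 2
    omega
  have tail : ∑' k : ℕ, a ^ (k + (m + 1)) * b ^ ((m : ℤ) - (k + (m + 1) : ℕ)).natAbs =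
      a ^ (m + 1) * b * (1 - a * b)⁻¹ := by
    have hk : ∀ k : ℕ, a ^ (k + (m + 1)) * b ^ ((m : ℤ) - (k + (m + 1) : ℕ)).natAbs =
        a ^ (m + 1) * b * (a * b) ^ k := fun k => by
      rw [show ((m : ℤ) - (k + (m + 1) : ℕ)).natAbs = k + 1 by omega]
      ring
    rw [tsum_congr hk, tsum_mul_left, tsum_geometric_of_norm_lt_one (norm_mul_lt_one ha hb)]
  have hsum := (summable_norm_pow ha).mul_pow_of_norm_le_one hb.le fun n => ((m : ℤ) - n).natAbs
  rw [← hsum.sum_add_tsum_nat_add (m + 1), head, tail]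
  field_simp
  ring

lemma hasSum_pow_mul_pow_prod {x y : 𝕜} (hx : ‖x‖ < 1) (hy : ‖y‖ < 1) :
    HasSum (fun p : ℕ × ℕ => x ^ p.1 * y ^ p.2) ((1 - x)⁻¹ * (1 - y)⁻¹) := by
  have hx' := summable_norm_pow hx
  have hy' := summable_norm_pow hy
  rw [← tsum_geometric_of_norm_lt_one hx, ← tsum_geometric_of_norm_lt_one hy,
    tsum_mul_tsum_of_summable_norm hx' hy']
  exact (summable_mul_of_summable_norm hx' hy').hasSum

end GeometricSums

theorem stmt_13 (l1 l2 l3 l4 : ℝ) (h1 : |l1| < 1) (h2 : |l2| < 1) (h3 : |l3| < 1)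
    (h4 : |l4| < 1) (h34 : l3 ≠ l4) (S : ℕ) :
    ∑' t : ℕ × ℕ × ℕ,
        l1 ^ t.1 * l2 ^ t.2.1 * l3 ^ t.2.2 * l4 ^ ((S : ℤ) + t.1 + t.2.1 - t.2.2).natAbs =
      l3 ^ (S + 1) * (1 - l4 ^ 2) / ((l3 - l4) * (1 - l3 * l1) * (1 - l3 * l2) * (1 - l3 * l4)) +
      l4 ^ (S + 1) / ((l4 - l3) * (1 - l4 * l1) * (1 - l4 * l2)) := by
  rw [← Real.norm_eq_abs] at h1 h2 h3 h4
  set A := l3 * (1 - l4 ^ 2) / ((l3 - l4) * (1 - l3 * l4)) with hA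
  set B := l4 / (l4 - l3) with hB
  have hsum : Summable fun q : (ℕ × ℕ) × ℕ =>
      l1 ^ q.1.1 * l2 ^ q.1.2 * l3 ^ q.2 * l4 ^ ((S : ℤ) + q.1.1 + q.1.2 - q.2).natAbs :=
    (((summable_norm_pow h1).mul_norm (summable_norm_pow h2)).mul_norm
      (summable_norm_pow h3)).mul_pow_of_norm_le_one h4.le _
  have hinner : ∀ i j : ℕ,
      ∑' k : ℕ, l1 ^ i * l2 ^ j * l3 ^ k * l4 ^ ((S : ℤ) + i + j - k).natAbs =
        A * l3 ^ S * ((l3 * l1) ^ i * (l3 * l2) ^ j) +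
          B * l4 ^ S * ((l4 * l1) ^ i * (l4 * l2) ^ j) := by
    intro i j
    have hk : ∀ k : ℕ, l1 ^ i * l2 ^ j * l3 ^ k * l4 ^ ((S : ℤ) + i + j - k).natAbs =
        l1 ^ i * l2 ^ j * (l3 ^ k * l4 ^ (((S + i + j : ℕ) : ℤ) - k).natAbs) := fun k => by
      push_cast
      ring
    rw [tsum_congr hk, tsum_mul_left, tsum_pow_mul_pow_natAbs_sub h3 h4 h34]
    ring
  calc _ = ∑' q : (ℕ × ℕ) × ℕ,
        l1 ^ q.1.1 * l2 ^ q.1.2 * l3 ^ q.2 * l4 ^ ((S : ℤ) + q.1.1 + q.1.2 - q.2).natAbs :=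
        ((Equiv.prodAssoc ℕ ℕ ℕ).tsum_eq _).symm
    _ = ∑' p : ℕ × ℕ, (A * l3 ^ S * ((l3 * l1) ^ p.1 * (l3 * l2) ^ p.2) +
          B * l4 ^ S * ((l4 * l1) ^ p.1 * (l4 * l2) ^ p.2)) := by
        rw [hsum.tsum_prod' hsum.prod_factor]
        exact tsum_congr fun p => hinner p.1 p.2
    _ = A * l3 ^ S * ((1 - l3 * l1)⁻¹ * (1 - l3 * l2)⁻¹) +
          B * l4 ^ S * ((1 - l4 * l1)⁻¹ * (1 - l4 * l2)⁻¹) :=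
        ((hasSum_pow_mul_pow_prod (norm_mul_lt_one h3 h1) (norm_mul_lt_one h3 h2)).mul_left _
          |>.add <| (hasSum_pow_mul_pow_prod (norm_mul_lt_one h4 h1)
            (norm_mul_lt_one h4 h2)).mul_left _).tsum_eq
    _ = _ := by
        rw [hA, hB]
        field_simp [sub_ne_zero.mpr h34, sub_ne_zero.mpr h34.symm,
          one_sub_mul_ne_zero_of_norm_lt_one h3 h1, one_sub_mul_ne_zero_of_norm_lt_one h3 h2,
          one_sub_mul_ne_zero_of_norm_lt_one h4 h1, one_sub_mul_ne_zero_of_norm_lt_one h4 h2,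
          one_sub_mul_ne_zero_of_norm_lt_one h3 h4]
        ring
end
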